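/- Let k ≥ 2 and let G be a finite simple graph with no isolated vertices that is {S_k, kK₂, S_{k−1}∪K₂}-free and satisfies e(G) = (k−1)². Then G is isomorphic to the complete bipartite graph K_{k−1,k−1}, or k = 4 and G is isomorphic to the disjoint union of three triangles 3K₃. -/

import Mathlib

def IsMatchingSet {V : Type*} (G : SimpleGraph V) (M : Finset (Sym2 V)) : Prop :=
  (∀ e ∈ M, e ∈ G.edgeSet) ∧ ∀ e ∈ M, ∀ f ∈ M, e ≠ f → ∀ v, v ∈ e → v ∉ f

def ContainsCopy {α β : Type*} (H : SimpleGraph α) (G : SimpleGraph β) : Prop :=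
  ∃ f : α → β, Function.Injective f ∧ ∀ a b, H.Adj a b → G.Adj (f a) (f b)

def kMatching (k : ℕ) : SimpleGraph (Fin (2 * k)) :=
  SimpleGraph.fromRel (fun a b => (a : ℕ) / 2 = (b : ℕ) / 2)

def starGraph (m : ℕ) : SimpleGraph (Fin 1 ⊕ Fin m) := completeBipartiteGraph (Fin 1) (Fin m)

def disjUnionGraph {α β : Type*} (G : SimpleGraph α) (H : SimpleGraph β) : SimpleGraph (α ⊕ β) :=
  SimpleGraph.fromRel (fun x y => match x, y with
    | Sum.inl a, Sum.inl b => G.Adj a b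
    | Sum.inr a, Sum.inr b => H.Adj a b
    | _, _ => False)

def threeK3 : SimpleGraph (Fin 9) :=
  SimpleGraph.fromRel (fun a b => (a : ℕ) / 3 = (b : ℕ) / 3)


/-!
Forbidding `S_k` and `k K₂` bounds the maximum degree `Δ` and the matching number `ν` by
`k - 1`; write `d = k - 1`.

If some vertex `v` has degree `d`, forbidding `S_{k-1} ∪ K₂` makes `N(v)` a vertex cover. A vertex
cover of size `d` in a graph with `Δ ≤ d` covers at most `d²` edges, and exactly `d²` only if it is
independent and all its vertices have degree `d`; this rigidity, applied at `v` and at each of its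
neighbours, forces `G = K_{d,d}`.

Otherwise `Δ ≤ d - 1`, and `d² = e(G) ≤ ν (Δ + 1) ≤ d²`. This bound is proved by deleting a vertex
whose removal lowers `ν` when there is one; when there is none, Gallai's lemma says that every
component has at most one vertex missed by a maximum matching, and counting degrees component by
component gives the bound, with equality only when every component is a `K_{Δ+1}`. Then `G` is
a disjoint union of `c` copies of `K_d` with `d²` edges, so `c (d - 1) = 2d`, whence `d = 3` and
`G = 3K₃` (`d = 2` would make the edge set a matching of size `4 > ν`).
-/

open Finset

section Matchings

variable {V : Type*}

def Exposes (M : Finset (Sym2 V)) (v : V) : Prop := ∀ e ∈ M, v ∉ e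

instance [DecidableEq V] (M : Finset (Sym2 V)) : DecidablePred (Exposes M) :=
  fun v => inferInstanceAs (Decidable (∀ e ∈ M, v ∉ e))

def IsMaximumMatchingSet (G : SimpleGraph V) (M : Finset (Sym2 V)) : Prop :=
  IsMatchingSet G M ∧ ∀ N, IsMatchingSet G N → #N ≤ #M

def Finset.pivot [DecidableEq V] (M : Finset (Sym2 V)) (a b c : V) : Finset (Sym2 V) :=
  insert s(b, c) (M.erase s(a, b))

variable {G : SimpleGraph V} {M N : Finset (Sym2 V)} {a b c v : V}

lemma Exposes.mk_notMem_left (h : Exposes M a) : s(a, b) ∉ M :=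
  fun hab => h _ hab (Sym2.mem_mk_left a b)

lemma Exposes.mk_notMem_right (h : Exposes M b) : s(a, b) ∉ M :=
  fun hab => h _ hab (Sym2.mem_mk_right a b)

lemma Exposes.mono (h : Exposes M v) (hNM : N ⊆ M) : Exposes N v :=
  fun e he => h e (hNM he)

lemma exists_mk_mem_of_not_exposes (h : ¬ Exposes M v) : ∃ w, s(v, w) ∈ M := by
  simp only [Exposes, not_forall, not_not] at h
  obtain ⟨e, he, hv⟩ := h
  exact ⟨Sym2.Mem.other hv, by rwa [Sym2.other_spec hv]⟩

namespace IsMatchingSet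

lemma empty : IsMatchingSet G ∅ := ⟨by simp, by simp⟩

lemma singleton (h : G.Adj a b) : IsMatchingSet G {s(a, b)} :=
  ⟨by simpa using h, by simp⟩

lemma subset (hM : IsMatchingSet G M) (hNM : N ⊆ M) : IsMatchingSet G N :=
  ⟨fun e he => hM.1 e (hNM he), fun e he f hf => hM.2 e (hNM he) f (hNM hf)⟩

lemma adj (hM : IsMatchingSet G M) (h : s(a, b) ∈ M) : G.Adj a b := hM.1 _ h

lemma eq_of_mem_of_mem (hM : IsMatchingSet G M) {e f : Sym2 V} (he : e ∈ M) (hf : f ∈ M)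
    (hve : v ∈ e) (hvf : v ∈ f) : e = f :=
  by_contra fun hef => hM.2 e he f hf hef v hve hvf

lemma eq_of_mk_mem_of_mk_mem (hM : IsMatchingSet G M) (hb : s(a, b) ∈ M) (hc : s(a, c) ∈ M) :
    b = c :=
  Sym2.congr_right.1 (hM.eq_of_mem_of_mem hb hc (Sym2.mem_mk_left a b) (Sym2.mem_mk_left a c))

variable [DecidableEq V]

lemma insert (hM : IsMatchingSet G M) (hab : G.Adj a b) (ha : Exposes M a) (hb : Exposes M b) :
    IsMatchingSet G (insert s(a, b) M) := by
  refine ⟨by simpa [Set.insert_subset_iff] using ⟨hab, hM.1⟩, ?_⟩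
  simp only [mem_insert]
  rintro _ (rfl | he) _ (rfl | hf) hef x hxe hxf
  · exact hef rfl
  · rcases Sym2.mem_iff.1 hxe with rfl | rfl
    exacts [ha _ hf hxf, hb _ hf hxf]
  · rcases Sym2.mem_iff.1 hxf with rfl | rfl
    exacts [ha _ he hxe, hb _ he hxe]
  · exact hM.2 _ he _ hf hef x hxe hxf

lemma exposes_erase_left (hM : IsMatchingSet G M) (hab : s(a, b) ∈ M) :
    Exposes (M.erase s(a, b)) a := fun _ he hae =>
  (mem_erase.1 he).1 (hM.eq_of_mem_of_mem (mem_erase.1 he).2 hab hae (Sym2.mem_mk_left a b))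

lemma exposes_erase_right (hM : IsMatchingSet G M) (hab : s(a, b) ∈ M) :
    Exposes (M.erase s(a, b)) b := by
  rw [Sym2.eq_swap] at hab ⊢
  exact hM.exposes_erase_left hab

lemma pivot (hM : IsMatchingSet G M) (hab : s(a, b) ∈ M) (hbc : G.Adj b c) (hc : Exposes M c) :
    IsMatchingSet G (M.pivot a b c) :=
  (hM.subset (erase_subset _ _)).insert hbc (hM.exposes_erase_right hab)
    (hc.mono (erase_subset _ _))

lemma exposes_pivot_left (hM : IsMatchingSet G M) (hab : s(a, b) ∈ M) (hac : a ≠ c) :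
    Exposes (M.pivot a b c) a := by
  intro e he hae
  rcases mem_insert.1 he with rfl | he
  · rcases Sym2.mem_iff.1 hae with rfl | rfl
    exacts [(hM.adj hab).ne rfl, hac rfl]
  · exact hM.exposes_erase_left hab e he hae

end IsMatchingSet

lemma IsMaximumMatchingSet.of_le_card (hM : IsMaximumMatchingSet G M) (hN : IsMatchingSet G N)
    (h : #M ≤ #N) : IsMaximumMatchingSet G N :=
  ⟨hN, fun L hL => (hM.2 L hL).trans h⟩

lemma SimpleGraph.exists_isMaximumMatchingSet [Finite V] (G : SimpleGraph V) :
    ∃ M, IsMaximumMatchingSet G M := by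
  obtain ⟨M, hM, hmax⟩ := Set.exists_max_image {M | IsMatchingSet G M} card (Set.toFinite _)
    ⟨∅, IsMatchingSet.empty⟩
  exact ⟨M, hM, hmax⟩

lemma SimpleGraph.isMatchingSet_deleteIncidenceSet_iff :
    IsMatchingSet (G.deleteIncidenceSet v) M ↔ IsMatchingSet G M ∧ Exposes M v := by
  simp only [IsMatchingSet, Exposes, SimpleGraph.edgeSet_deleteIncidenceSet, Set.mem_sdiff,
    SimpleGraph.incidenceSet, Set.mem_ofPred_eq, not_and]
  grind

variable [DecidableEq V]

lemma Exposes.pivot (hv : Exposes M v) (hvb : v ≠ b) (hvc : v ≠ c) :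
    Exposes (M.pivot a b c) v := by
  intro e he hve
  rcases mem_insert.1 he with rfl | he
  · rcases Sym2.mem_iff.1 hve with rfl | rfl <;> contradiction
  · exact hv e (mem_of_mem_erase he) hve

lemma Finset.card_pivot (hab : s(a, b) ∈ M) (hc : Exposes M c) : #(M.pivot a b c) = #M := by
  rw [Finset.pivot, card_insert_of_notMem fun h => hc.mk_notMem_right (mem_of_mem_erase h),
    card_erase_add_one hab]

lemma Finset.inter_subset_pivot (h : s(a, b) ∉ M) : M ∩ N ⊆ N.pivot a b c := fun _ he =>
  mem_insert_of_mem <| mem_erase.2 ⟨fun hea => h (hea ▸ (mem_inter.1 he).1), (mem_inter.1 he).2⟩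

lemma Finset.card_sdiff_pivot_lt (hcM : s(b, c) ∈ M) (hcN : s(b, c) ∉ N) (habM : s(a, b) ∉ M) :
    #(M \ N.pivot a b c) < #(M \ N) := by
  refine card_lt_card ((ssubset_iff_of_subset fun _ he => ?_).2
    ⟨s(b, c), mem_sdiff.2 ⟨hcM, hcN⟩, fun h => (mem_sdiff.1 h).2 (mem_insert_self _ _)⟩)
  obtain ⟨heM, heN⟩ := mem_sdiff.1 he
  exact mem_sdiff.2 ⟨heM, fun h => heN (inter_subset_pivot habM (mem_inter.2 ⟨heM, h⟩))⟩

namespace IsMaximumMatchingSet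

lemma not_exposes_of_adj (hM : IsMaximumMatchingSet G M) (hab : G.Adj a b) (ha : Exposes M a) :
    ¬ Exposes M b := fun hb => by
  have := hM.2 _ (hM.1.insert hab ha hb)
  rw [card_insert_of_notMem ha.mk_notMem_left] at this
  omega

lemma pivot (hM : IsMaximumMatchingSet G M) (hab : s(a, b) ∈ M) (hbc : G.Adj b c)
    (hc : Exposes M c) : IsMaximumMatchingSet G (M.pivot a b c) :=
  hM.of_le_card (hM.1.pivot hab hbc hc) (card_pivot hab hc).ge

/-- Follow the alternating path of `M ∆ N` from `z`: pivot `N` onto the `M`-edge `z z₁`, recurse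
from the vertex `z₂` this exposes, and pivot the resulting matching back from `z z₁` to `z₁ z₂`.
The invariant `M ∩ N ⊆ M'` keeps `z z₁` in the recursive result. -/
theorem exists_exposes_of_exposes {z : V} (hM : IsMaximumMatchingSet G M)
    (hN : IsMaximumMatchingSet G N) (hz : Exposes N z) :
    ∃ M', IsMaximumMatchingSet G M' ∧ Exposes M' z ∧ M ∩ N ⊆ M' ∧
      ∃ t, ∀ v, Exposes M v → v ≠ t → Exposes M' v := by
  induction hn : #(M \ N) using Nat.strong_induction_on generalizing N z with
  | _ n ih =>
  by_cases hzM : Exposes M z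
  · exact ⟨M, hM, hzM, inter_subset_left, z, fun v hv _ => hv⟩
  obtain ⟨z₁, hz₁⟩ := exists_mk_mem_of_not_exposes hzM
  have hzz₁ := hM.1.adj hz₁
  obtain ⟨z₂, hz₁z₂⟩ := exists_mk_mem_of_not_exposes (hN.not_exposes_of_adj hzz₁ hz)
  have hz₂ : s(z₂, z₁) ∈ N := by rwa [Sym2.eq_swap]
  have hz₂z : z₂ ≠ z := fun h => hz _ hz₂ (h ▸ Sym2.mem_mk_left z₂ z₁)
  have hz₂M : s(z₂, z₁) ∉ M := fun h => hz₂z <|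
    hM.1.eq_of_mk_mem_of_mk_mem (by rwa [Sym2.eq_swap]) (by rwa [Sym2.eq_swap])
  have hz₁M : s(z₁, z) ∈ M := by rwa [Sym2.eq_swap]
  obtain ⟨M'', hM'', hz₂M'', hz₁M'', hMM'', t, ht⟩ : ∃ M'', IsMaximumMatchingSet G M'' ∧
      Exposes M'' z₂ ∧ s(z, z₁) ∈ M'' ∧ M ∩ N ⊆ M'' ∧
      ∃ t, ∀ v, Exposes M v → v ≠ t → v ≠ z₂ ∧ Exposes M'' v := by
    by_cases hz₂exp : Exposes M z₂
    · exact ⟨M, hM, hz₂exp, hz₁, inter_subset_left, z₂, fun v hv hvt => ⟨hvt, hv⟩⟩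
    obtain ⟨M'', hM'', hz₂M'', hMM'', t, ht⟩ :=
      ih _ (hn ▸ card_sdiff_pivot_lt hz₁M hz.mk_notMem_right hz₂M)
        (hN.pivot hz₂ hzz₁.symm hz) (hN.1.exposes_pivot_left hz₂ hz₂z) rfl
    refine ⟨M'', hM'', hz₂M'', ?_, fun e he => hMM'' ?_, t, fun v hv hvt =>
      ⟨fun h => hz₂exp (h ▸ hv), ht v hv hvt⟩⟩
    · rw [Sym2.eq_swap]
      exact hMM'' (mem_inter.2 ⟨hz₁M, mem_insert_self _ _⟩)
    · exact mem_inter.2 ⟨(mem_inter.1 he).1, inter_subset_pivot hz₂M he⟩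
  refine ⟨M''.pivot z z₁ z₂, hM''.pivot hz₁M'' (hN.1.adj hz₁z₂) hz₂M'',
    hM''.1.exposes_pivot_left hz₁M'' hz₂z.symm, fun e he => ?_, t, fun v hv hvt => ?_⟩
  · exact mem_insert_of_mem (mem_erase.2
      ⟨fun h => hz.mk_notMem_left (b := z₁) (h ▸ (mem_inter.1 he).2), hMM'' he⟩)
  · obtain ⟨hvz₂, hv''⟩ := ht v hv hvt
    exact hv''.pivot (fun h => hv _ hz₁ (h ▸ Sym2.mem_mk_right z z₁)) hvz₂

/-- Gallai's lemma. Along a walk `u z … w`, a maximum matching missing `z` turns `M` into one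
missing `z` and `u` (impossible, as `u ∼ z`) or `z` and `w` (closer together). -/
theorem not_reachable (hess : ∀ z, ∃ N, IsMaximumMatchingSet G N ∧ Exposes N z) {u w : V}
    (hM : IsMaximumMatchingSet G M) (hu : Exposes M u) (hw : Exposes M w) (huw : u ≠ w) :
    ¬ G.Reachable u w := by
  rintro ⟨p⟩
  induction p generalizing M with
  | nil => exact huw rfl
  | @cons u z w hadj q ih =>
    obtain ⟨N, hN, hzN⟩ := hess z
    obtain ⟨M', hM', hzM', -, t, ht⟩ := hM.exists_exposes_of_exposes hN hzN
    by_cases hzw : z = w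
    · exact hM.not_exposes_of_adj hadj hu (hzw ▸ hw)
    by_cases hut : u = t
    · exact ih hM' hzM' (ht w hw (hut ▸ huw.symm)) hzw
    · exact hM'.not_exposes_of_adj hadj (ht u hu hut) hzM'

end IsMaximumMatchingSet

end Matchings

/-- For a component with `s` vertices, `m` of them covered by a maximum matching and degree sum
`S`. -/
lemma Nat.le_mul_add_one_of_le_add_one {s m S D : ℕ} (hms : m ≤ s) (hsm : s ≤ m + 1)
    (hSD : S ≤ s * D) (hSs : S ≤ s * (s - 1)) :
    S ≤ m * (D + 1) ∧ (S = m * (D + 1) → S = 0 ∨ s = D + 1 ∧ S = s * D) := by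
  obtain rfl | rfl : s = m ∨ s = m + 1 := by omega
  · exact ⟨by nlinarith, fun h => Or.inl (by nlinarith)⟩
  · simp only [Nat.add_sub_cancel] at hSs
    rcases le_or_gt m D with hmD | hmD
    · refine ⟨by nlinarith, fun h => ?_⟩
      rcases Nat.eq_zero_or_pos m with rfl | hm
      · simp_all
      · obtain rfl : m = D := by nlinarith
        exact Or.inr ⟨rfl, by nlinarith⟩
    · exact ⟨by nlinarith, fun h => absurd h (by nlinarith)⟩

namespace SimpleGraph

variable {V : Type*} [Fintype V] [DecidableEq V] {G : SimpleGraph V} {M : Finset (Sym2 V)}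
  {D : ℕ}

lemma card_filter_not_exposes (hM : IsMatchingSet G M) : #{v | ¬ Exposes M v} = 2 * #M := by
  have : ({v | ¬ Exposes M v} : Finset V) = M.biUnion Sym2.toFinset := by
    ext v
    simp [Exposes, Sym2.mem_toFinset]
  rw [this, card_biUnion, sum_congr rfl fun e he => Sym2.card_toFinset_of_not_isDiag e
    (G.not_isDiag_of_mem_edgeSet (hM.1 e he)), sum_const, smul_eq_mul, mul_comm]
  intro e he f hf hef
  rw [Function.onFun, Finset.disjoint_left]
  exact fun x hxe hxf => hM.2 e he f hf hef x (Sym2.mem_toFinset.1 hxe) (Sym2.mem_toFinset.1 hxf)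

variable [DecidableRel G.Adj]

section Components

lemma sum_sum_supp_toFinset {β : Type*} [AddCommMonoid β] (f : V → β) :
    ∑ c : G.ConnectedComponent, ∑ v ∈ c.supp.toFinset, f v = ∑ v, f v := by
  classical
  rw [← sum_fiberwise univ G.connectedComponentMk f]
  congr! with c
  ext v
  simp

lemma neighborFinset_subset_supp_erase (v : V) :
    G.neighborFinset v ⊆ (G.connectedComponentMk v).supp.toFinset.erase v := by
  intro w hw
  rw [mem_neighborFinset] at hw
  simp [hw.ne', hw.symm.reachable]

lemma sum_degree_supp_le_of_forall_exposes (hD : ∀ v, G.degree v ≤ D)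
    (hess : ∀ z, ∃ N, IsMaximumMatchingSet G N ∧ Exposes N z) (hM : IsMaximumMatchingSet G M)
    (c : G.ConnectedComponent) :
    ∑ v ∈ c.supp.toFinset, G.degree v ≤ #{v ∈ c.supp.toFinset | ¬ Exposes M v} * (D + 1) ∧
      (∑ v ∈ c.supp.toFinset, G.degree v = #{v ∈ c.supp.toFinset | ¬ Exposes M v} * (D + 1) →
        ∑ v ∈ c.supp.toFinset, G.degree v = 0 ∨
          #c.supp.toFinset = D + 1 ∧ ∑ v ∈ c.supp.toFinset, G.degree v = #c.supp.toFinset * D) := by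
  have hexp : #{v ∈ c.supp.toFinset | Exposes M v} ≤ 1 :=
    card_le_one.2 fun a ha b hb => by
      simp only [mem_filter, Set.mem_toFinset, ConnectedComponent.mem_supp_iff] at ha hb
      by_contra hab
      exact hM.not_reachable hess ha.2 hb.2 hab (ConnectedComponent.exact (ha.1.trans hb.1.symm))
  have hsplit := card_filter_add_card_filter_not (s := c.supp.toFinset) (fun v => ¬ Exposes M v)
  simp only [not_not] at hsplit
  refine Nat.le_mul_add_one_of_le_add_one (card_filter_le _ _) (by omega)
    (sum_le_card_nsmul _ _ _ fun v _ => hD v) (sum_le_card_nsmul _ _ _ fun v hv => ?_)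
  obtain rfl := (c.mem_supp_iff v).1 (Set.mem_toFinset.1 hv)
  rw [← card_neighborFinset_eq_degree, ← card_erase_of_mem hv]
  exact card_le_card (G.neighborFinset_subset_supp_erase v)

lemma degree_eq_and_adj_of_sum_degree_eq (hD : ∀ v, G.degree v ≤ D) (v : V)
    (hF : #(G.connectedComponentMk v).supp.toFinset = D + 1)
    (hS : ∑ w ∈ (G.connectedComponentMk v).supp.toFinset, G.degree w = (D + 1) * D) :
    G.degree v = D ∧ ∀ w, G.Reachable v w → v ≠ w → G.Adj v w := by
  set F := (G.connectedComponentMk v).supp.toFinset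
  have hvF : v ∈ F := by simp [F]
  have hdeg : G.degree v = D := by
    by_contra hne
    refine lt_irrefl ((D + 1) * D) ?_
    calc (D + 1) * D = ∑ w ∈ F, G.degree w := hS.symm
      _ < ∑ _w ∈ F, D := sum_lt_sum (fun w _ => hD w) ⟨v, hvF, lt_of_le_of_ne (hD v) hne⟩
      _ = (D + 1) * D := by rw [sum_const, smul_eq_mul, hF]
  have hN : G.neighborFinset v = F.erase v :=
    eq_of_subset_of_card_le (G.neighborFinset_subset_supp_erase v)
      (by rw [card_erase_of_mem hvF, hF, card_neighborFinset_eq_degree, hdeg]; rfl)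
  refine ⟨hdeg, fun w hvw hne => ?_⟩
  have : w ∈ F.erase v := mem_erase.2 ⟨hne.symm, by simpa [F] using hvw.symm⟩
  rwa [← hN, mem_neighborFinset] at this

theorem card_edgeFinset_le_of_forall_exposes (hD : ∀ v, G.degree v ≤ D)
    (hess : ∀ z, ∃ N, IsMaximumMatchingSet G N ∧ Exposes N z) (hM : IsMaximumMatchingSet G M) :
    #G.edgeFinset ≤ #M * (D + 1) ∧ (#G.edgeFinset = #M * (D + 1) →
      ∀ v, 0 < G.degree v → G.degree v = D ∧ ∀ w, G.Reachable v w → v ≠ w → G.Adj v w) := by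
  have hbound := G.sum_degree_supp_le_of_forall_exposes hD hess hM
  have hdeg : ∑ c : G.ConnectedComponent, ∑ v ∈ c.supp.toFinset, G.degree v =
      2 * #G.edgeFinset := by
    rw [sum_sum_supp_toFinset, sum_degrees_eq_twice_card_edges]
  have hcov : ∑ c : G.ConnectedComponent, #{v ∈ c.supp.toFinset | ¬ Exposes M v} = 2 * #M := by
    simp only [card_filter]
    rw [sum_sum_supp_toFinset, ← card_filter, card_filter_not_exposes hM.1]
  have hle : 2 * #G.edgeFinset ≤ 2 * (#M * (D + 1)) := by
    rw [← hdeg, ← mul_assoc, ← hcov, sum_mul]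
    exact sum_le_sum fun c _ => (hbound c).1
  refine ⟨by omega, fun heq v hv => ?_⟩
  have hall := (sum_eq_sum_iff_of_le fun c _ => (hbound c).1).1 (by
    rw [hdeg, ← sum_mul, hcov, heq, mul_assoc])
  obtain hzero | ⟨hF, hS⟩ := (hbound _).2 (hall (G.connectedComponentMk v) (mem_univ _))
  · exact absurd (sum_eq_zero_iff.1 hzero v (by simp)) hv.ne'
  · exact G.degree_eq_and_adj_of_sum_degree_eq hD v hF (hF ▸ hS)

end Components

/-- If deleting some vertex `v` lowers the matching number, induct on `G - v`, which loses at most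
`Δ` edges while the bound drops by `Δ + 1`; otherwise Gallai's lemma applies. -/
theorem card_edgeFinset_le_mul_add_one (hD : ∀ v, G.degree v ≤ D)
    (hM : IsMaximumMatchingSet G M) :
    #G.edgeFinset ≤ #M * (D + 1) ∧ (#G.edgeFinset = #M * (D + 1) →
      ∀ v, 0 < G.degree v → G.degree v = D ∧ ∀ w, G.Reachable v w → v ≠ w → G.Adj v w) := by
  induction hn : #G.edgeFinset using Nat.strong_induction_on generalizing G M with
  | _ n ih =>
  choose Mv hMv using fun v => (G.deleteIncidenceSet v).exists_isMaximumMatchingSet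
  have hMvG v := isMatchingSet_deleteIncidenceSet_iff.1 (hMv v).1
  by_cases hess : ∀ v, #M ≤ #(Mv v)
  · exact hn ▸ G.card_edgeFinset_le_of_forall_exposes hD
      (fun v => ⟨Mv v, hM.of_le_card (hMvG v).1 (hess v), (hMvG v).2⟩) hM
  obtain ⟨v, hv⟩ := not_forall.1 hess
  rw [not_le] at hv
  have hdeg : 0 < G.degree v := by
    refine Nat.pos_of_ne_zero fun h0 => hv.not_ge ((hMv v).2 M ?_)
    refine isMatchingSet_deleteIncidenceSet_iff.2 ⟨hM.1, fun e he hve => ?_⟩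
    rw [← Sym2.other_spec hve] at he
    exact ((G.degree_pos_iff_exists_adj v).2 ⟨_, hM.1.adj he⟩).ne' h0
  have hlt : #(G.deleteIncidenceSet v).edgeFinset < n := by
    rw [card_edgeFinset_deleteIncidenceSet]
    have := G.degree_le_card_edgeFinset v
    omega
  have hGv := (ih _ hlt (fun w => (degree_le_of_le (G.deleteIncidenceSet_le v)).trans (hD w))
    (hMv v) rfl).1
  rw [card_edgeFinset_deleteIncidenceSet, hn, Nat.sub_le_iff_le_add] at hGv
  have hstrict : n < #M * (D + 1) := by nlinarith [hD v]
  exact ⟨hstrict.le, fun h => absurd h hstrict.ne⟩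

end SimpleGraph

section Copies

open SimpleGraph (Copy)

variable {V α β : Type*} {G : SimpleGraph V} {H₁ : SimpleGraph α} {H₂ : SimpleGraph β}
  {M : Finset (Sym2 V)} {k m : ℕ} {v : V}

lemma SimpleGraph.Copy.containsCopy (f : Copy H₁ G) : ContainsCopy H₁ G :=
  ⟨f, f.injective, fun _ _ h => f.toHom.map_adj h⟩

lemma containsCopy_disjUnionGraph (f₁ : Copy H₁ G) (f₂ : Copy H₂ G) (h : ∀ a b, f₁ a ≠ f₂ b) :
    ContainsCopy (disjUnionGraph H₁ H₂) G := by
  refine ⟨Sum.elim f₁ f₂, f₁.injective.sumElim f₂.injective h, ?_⟩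
  rintro (a | a) (b | b) hab <;> simp only [disjUnionGraph, SimpleGraph.fromRel_adj] at hab
  · exact f₁.toHom.map_adj (hab.2.elim id fun h => h.symm)
  · exact hab.2.elim False.elim False.elim
  · exact hab.2.elim False.elim False.elim
  · exact f₂.toHom.map_adj (hab.2.elim id fun h => h.symm)

def starGraph.copy (v : V) (g : Fin m ↪ G.neighborSet v) : Copy (starGraph m) G :=
  ⟨⟨Sum.elim (fun _ => v) (fun i => g i), by
    rintro (a | a) (b | b) hab <;>
      simp only [starGraph, completeBipartiteGraph_adj, Sum.isLeft_inl, Sum.isLeft_inr,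
        Sum.isRight_inl, Sum.isRight_inr, Bool.false_eq_true, and_false, and_true, and_self,
        or_self, or_false, or_true, Sum.elim_inl, Sum.elim_inr] at hab ⊢
    · exact (g b).2
    · exact ((g a).2 : G.Adj v _).symm⟩,
    Function.Injective.sumElim (fun _ _ _ => Subsingleton.elim _ _)
      (Subtype.val_injective.comp g.injective) fun _ i => ((g i).2 : G.Adj v _).ne⟩

lemma IsMatchingSet.exists_copy_kMatching (hM : IsMatchingSet G M) (hk : k ≤ #M) :
    ∃ f : Copy (kMatching k) G, ∀ i, ∃ e ∈ M, f i ∈ e := by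
  let ε : Fin k ↪ M := (Fin.castLEEmb hk).trans M.equivFin.symm.toEmbedding
  have hends (e : Sym2 V) : ∃ x y, s(x, y) = e := by
    induction e using Sym2.ind with | _ x y => exact ⟨x, y, rfl⟩
  choose a b hab using fun q => hends (ε q)
  have hadj q : G.Adj (a q) (b q) := hM.1 s(a q, b q) (by rw [hab q]; exact (ε q).2)
  let half (i : Fin (2 * k)) : Fin k := ⟨i / 2, by omega⟩
  let f (i : Fin (2 * k)) : V := if (i : ℕ) % 2 = 0 then a (half i) else b (half i)
  have hf i : f i ∈ (ε (half i) : Sym2 V) := by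
    rw [← hab]
    by_cases h : (i : ℕ) % 2 = 0 <;> simp [f, h]
  refine ⟨⟨⟨f, fun {i j} hij => ?_⟩, fun i j hij => ?_⟩, fun i => ⟨_, (ε (half i)).2, hf i⟩⟩
  · simp only [kMatching, SimpleGraph.fromRel_adj, eq_comm (a := (j : ℕ) / 2), or_self] at hij
    have hq : half i = half j := Fin.ext hij.2
    by_cases hi : (i : ℕ) % 2 = 0 <;> by_cases hj : (j : ℕ) % 2 = 0
    · omega
    · simpa [f, hi, hj, hq] using hadj (half j)
    · simpa [f, hi, hj, hq] using (hadj (half j)).symm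
    · omega
  · change f i = f j at hij
    have hq : half i = half j := by
      by_contra hne
      exact hM.2 _ (ε (half i)).2 _ (ε (half j)).2 (fun h => hne (ε.injective (Subtype.ext h)))
        (f i) (hf i) (hij ▸ hf j)
    have hq' : (i : ℕ) / 2 = j / 2 := congrArg Fin.val hq
    by_cases hi : (i : ℕ) % 2 = 0 <;> by_cases hj : (j : ℕ) % 2 = 0
    · exact Fin.ext (by omega)
    · exact absurd (by simpa [f, hi, hj, hq] using hij) (hadj (half j)).ne
    · exact absurd (by simpa [f, hi, hj, hq] using hij.symm) (hadj (half j)).ne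
    · exact Fin.ext (by omega)

lemma IsMatchingSet.card_lt_of_not_containsCopy (h : ¬ ContainsCopy (kMatching k) G)
    (hM : IsMatchingSet G M) : #M < k := by
  by_contra! hk
  obtain ⟨f, -⟩ := hM.exists_copy_kMatching hk
  exact h f.containsCopy

variable [Fintype V] [DecidableRel G.Adj]

lemma SimpleGraph.nonempty_embedding_neighborSet (hv : m ≤ G.degree v) :
    Nonempty (Fin m ↪ G.neighborSet v) :=
  Function.Embedding.nonempty_of_card_le (by rwa [Fintype.card_fin, G.card_neighborSet_eq_degree])

lemma degree_lt_of_not_containsCopy_starGraph (h : ¬ ContainsCopy (starGraph m) G) (v : V) :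
    G.degree v < m := by
  by_contra! hm
  obtain ⟨g⟩ := G.nonempty_embedding_neighborSet hm
  exact h (starGraph.copy v g).containsCopy

lemma isVertexCover_neighborSet_of_not_containsCopy
    (h : ¬ ContainsCopy (disjUnionGraph (starGraph m) (kMatching 1)) G) (hv : G.degree v = m) :
    G.IsVertexCover (G.neighborSet v) := by
  intro x y hxy
  by_contra! hout
  have hxv : x ≠ v := fun hx => hout.2 (hx ▸ hxy)
  have hyv : y ≠ v := fun hy => hout.1 (hy ▸ hxy.symm)
  obtain ⟨g⟩ := G.nonempty_embedding_neighborSet hv.ge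
  obtain ⟨f, hf⟩ := (IsMatchingSet.singleton hxy).exists_copy_kMatching (k := 1) (by simp)
  refine h (containsCopy_disjUnionGraph (starGraph.copy v g) f fun a i hai => ?_)
  obtain ⟨e, he, hie⟩ := hf i
  rw [mem_singleton] at he
  subst he
  rw [← hai] at hie
  rcases a with a | a
  · rcases Sym2.mem_iff.1 hie with h | h
    exacts [hxv h.symm, hyv h.symm]
  · have hg : (g a : V) ∈ G.neighborSet v := (g a).2
    rcases Sym2.mem_iff.1 hie with h | h
    exacts [hout.1 (h ▸ hg), hout.2 (h ▸ hg)]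

end Copies

lemma Nat.eq_two_or_eq_three_of_mul_sub_one_eq {c d : ℕ} (hd : 0 < d)
    (h : c * (d - 1) = 2 * d) : d = 2 ∧ c = 4 ∨ d = 3 ∧ c = 3 := by
  have hd2 : 2 ≤ d := by
    by_contra! hd2
    obtain rfl : d = 1 := by omega
    simp at h
  have hc : 3 ≤ c := by
    by_contra! hc
    have : c * (d - 1) ≤ 2 * (d - 1) := Nat.mul_le_mul_right _ (by omega)
    omega
  have hd3 : d ≤ 3 := by
    by_contra! hd3
    have : 3 * (d - 1) ≤ c * (d - 1) := Nat.mul_le_mul_right _ hc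
    omega
  interval_cases d <;> omega

namespace SimpleGraph

variable {V : Type*} [Fintype V] {G : SimpleGraph V} {d : ℕ} {A : Finset V}

lemma nonempty_iso_threeK3_of_adj_iff {ι : Type*} [Fintype ι] [DecidableEq ι] (f : V → ι)
    (hι : Fintype.card ι = 3) (hf : ∀ i, #{v | f v = i} = 3)
    (hadj : ∀ x y, G.Adj x y ↔ x ≠ y ∧ f x = f y) : Nonempty (G ≃g threeK3) := by
  have hfib i : Fintype.card {v // f v = i} = 3 := by rw [Fintype.card_subtype, hf]
  let σ : ι ≃ Fin 3 := Fintype.equivFinOfCardEq hι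
  let e : V ≃ Fin 9 := (Equiv.sigmaFiberEquiv f).symm.trans <|
    (Equiv.sigmaCongrRight fun i => Fintype.equivFinOfCardEq (hfib i)).trans <|
    (Equiv.sigmaEquivProd ι (Fin 3)).trans <|
    (Equiv.prodCongr σ (Equiv.refl _)).trans finProdFinEquiv
  have hdiv (p : Fin 3 × Fin 3) : ((finProdFinEquiv p : Fin (3 * 3)) : ℕ) / 3 = p.1 := by
    rw [finProdFinEquiv_apply_val]
    omega
  -- `e x` is `finProdFinEquiv (σ (f x), _)` by definition.
  have he x : (e x : ℕ) / 3 = σ (f x) := hdiv _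
  refine ⟨⟨e, fun {x y} => ?_⟩⟩
  rw [threeK3, fromRel_adj, he, he, hadj, e.injective.ne_iff, Fin.val_inj, Fin.val_inj,
    σ.injective.eq_iff, σ.injective.eq_iff, @eq_comm _ (f y), or_self]

variable [DecidableEq V]

lemma nonempty_iso_completeBipartiteGraph_of_adj_iff (hA : #A = d) (hAc : #Aᶜ = d)
    (hadj : ∀ x y, G.Adj x y ↔ (x ∈ A ↔ y ∉ A)) :
    Nonempty (G ≃g completeBipartiteGraph (Fin d) (Fin d)) := by
  let e : V ≃ Fin d ⊕ Fin d := (Equiv.sumCompl (· ∈ A)).symm.trans <| Equiv.sumCongr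
    (Fintype.equivFinOfCardEq (by simpa using hA))
    (Fintype.equivFinOfCardEq (by rwa [Fintype.card_subtype_compl, Fintype.card_coe,
      ← card_compl]))
  have he x : (e x).isLeft ↔ x ∈ A := by
    by_cases hx : x ∈ A <;> simp [e, hx, Equiv.sumCompl_symm_apply_of_pos,
      Equiv.sumCompl_symm_apply_of_neg]
  refine ⟨⟨e, fun {x y} => ?_⟩⟩
  rw [completeBipartiteGraph_adj, hadj, ← Sum.not_isLeft, ← Sum.not_isLeft, he, he]
  tauto

variable [DecidableRel G.Adj]

lemma sum_degree_eq_sum_card_filter_mem (A : Finset V) :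
    ∑ a ∈ A, G.degree a = ∑ e ∈ G.edgeFinset, #{a ∈ A | a ∈ e} := by
  simp_rw [← card_incidenceFinset_eq_degree, incidenceFinset_eq_filter]
  exact sum_card_bipartiteAbove_eq_sum_card_bipartiteBelow (fun a e => a ∈ e)

namespace IsVertexCover

lemma card_filter_mem_pos (hA : G.IsVertexCover A) {e : Sym2 V} (he : e ∈ G.edgeFinset) :
    0 < #{a ∈ A | a ∈ e} := by
  induction e using Sym2.ind with | _ x y =>
  rcases hA (mem_edgeFinset.1 he) with h | h
  exacts [card_pos.2 ⟨x, by simpa using h⟩, card_pos.2 ⟨y, by simpa using h⟩]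

lemma card_edgeFinset_le_sum_degree (hA : G.IsVertexCover A) :
    #G.edgeFinset ≤ ∑ a ∈ A, G.degree a := by
  rw [sum_degree_eq_sum_card_filter_mem, card_eq_sum_ones]
  exact sum_le_sum fun e he => hA.card_filter_mem_pos he

lemma card_edgeFinset_lt_sum_degree (hA : G.IsVertexCover A) {a b : V} (ha : a ∈ A)
    (hb : b ∈ A) (hab : G.Adj a b) : #G.edgeFinset < ∑ a ∈ A, G.degree a := by
  rw [sum_degree_eq_sum_card_filter_mem, card_eq_sum_ones]
  refine sum_lt_sum (fun e he => hA.card_filter_mem_pos he) ⟨s(a, b), mem_edgeFinset.2 hab, ?_⟩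
  have : {a, b} ⊆ ({c ∈ A | c ∈ s(a, b)} : Finset V) := by
    intro c hc
    simp only [mem_insert, mem_singleton] at hc
    rcases hc with rfl | rfl <;> simp [ha, hb]
  have := card_le_card this
  rw [card_pair hab.ne] at this
  omega

lemma degree_eq_and_isIndepSet (hD : ∀ v, G.degree v ≤ d) (hA : G.IsVertexCover A)
    (hAd : #A = d) (he : #G.edgeFinset = d ^ 2) :
    (∀ a ∈ A, G.degree a = d) ∧ G.IsIndepSet A := by
  have hsum : ∑ a ∈ A, G.degree a ≤ ∑ _a ∈ A, d := sum_le_sum fun a _ => hD a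
  rw [sum_const, smul_eq_mul, hAd, ← sq] at hsum
  refine ⟨(sum_eq_sum_iff_of_le fun a _ => hD a).1 ?_, fun a ha b hb _ hab => ?_⟩
  · rw [sum_const, smul_eq_mul, hAd, ← sq]
    exact le_antisymm hsum (he ▸ hA.card_edgeFinset_le_sum_degree)
  · exact (he ▸ hA.card_edgeFinset_lt_sum_degree ha hb hab).not_ge hsum

end IsVertexCover

/-- `N(v)` is a vertex cover of size `d`, hence independent with all degrees `d`. A vertex `b`
outside it has a neighbour `y ∈ N(v)`, and for `a ∈ N(v)` the cover `N(a)` of the edge `b y` must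
contain `b`, as `a` and `y` are not adjacent. -/
theorem nonempty_iso_completeBipartiteGraph (hD : ∀ v, G.degree v ≤ d)
    (hcover : ∀ v, G.degree v = d → G.IsVertexCover (G.neighborSet v))
    (hiso : ∀ v, 0 < G.degree v) (he : #G.edgeFinset = d ^ 2) {v : V} (hv : G.degree v = d) :
    Nonempty (G ≃g completeBipartiteGraph (Fin d) (Fin d)) := by
  have hcov x (hx : G.degree x = d) : G.IsVertexCover (G.neighborFinset x : Set V) := by
    rw [coe_neighborFinset]
    exact hcover x hx
  set A := G.neighborFinset v
  have hAd : #A = d := by rw [card_neighborFinset_eq_degree, hv]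
  obtain ⟨hAdeg, hAind⟩ := (hcov v hv).degree_eq_and_isIndepSet hD hAd he
  have hAB a (ha : a ∈ A) b : G.Adj a b ↔ b ∉ A := by
    refine ⟨fun hab hb => hAind ha hb hab.ne hab, fun hb => ?_⟩
    obtain ⟨y, hy⟩ := (G.degree_pos_iff_exists_adj b).1 (hiso b)
    have hyA : y ∈ A := ((hcov v hv) hy).resolve_left hb
    rcases (hcov a (hAdeg a ha)) hy with h | h
    · exact (mem_neighborFinset _ _ _).1 h
    · have hay := (mem_neighborFinset _ _ _).1 h
      exact absurd hay (hAind ha hyA hay.ne)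
  obtain ⟨a, ha⟩ : A.Nonempty := card_pos.1 (hAd ▸ hv ▸ hiso v)
  refine nonempty_iso_completeBipartiteGraph_of_adj_iff hAd ?_ fun x y => ?_
  · have : Aᶜ = G.neighborFinset a := by
      ext b
      rw [mem_compl, ← hAB a ha, mem_neighborFinset]
    rw [this, card_neighborFinset_eq_degree, hAdeg a ha]
  · by_cases hx : x ∈ A
    · simp [hx, hAB x hx y]
    by_cases hy : y ∈ A
    · rw [G.adj_comm, hAB y hy x]
      simp [hx, hy]
    · simpa [hx, hy] using fun h => ((hcov v hv) h).elim hx hy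

lemma isMatchingSet_edgeFinset (hD : ∀ v, G.degree v ≤ 1) : IsMatchingSet G G.edgeFinset := by
  refine ⟨fun e he => mem_edgeFinset.1 he, fun e he f hf hef v hve hvf => ?_⟩
  have hsub : {e, f} ⊆ G.incidenceFinset v := by
    intro x hx
    simp only [mem_insert, mem_singleton] at hx
    rcases hx with rfl | rfl <;> rw [mem_incidenceFinset] <;>
      exact ⟨mem_edgeFinset.1 ‹_›, ‹_›⟩
  have := (card_le_card hsub).trans_eq (card_incidenceFinset_eq_degree G v)
  rw [card_pair hef] at this
  exact absurd (this.trans (hD v)) (by norm_num)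

lemma adj_iff_and_card_supp_eq {D : ℕ}
    (h : ∀ v, G.degree v = D ∧ ∀ w, G.Reachable v w → v ≠ w → G.Adj v w) :
    (∀ x y, G.Adj x y ↔ x ≠ y ∧ G.connectedComponentMk x = G.connectedComponentMk y) ∧
      ∀ c : G.ConnectedComponent, #c.supp.toFinset = D + 1 := by
  have hadj x y : G.Adj x y ↔ x ≠ y ∧ G.connectedComponentMk x = G.connectedComponentMk y :=
    ⟨fun hxy => ⟨hxy.ne, ConnectedComponent.connectedComponentMk_eq_of_adj hxy⟩,
      fun ⟨hne, hxy⟩ => (h x).2 y (ConnectedComponent.exact hxy) hne⟩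
  refine ⟨hadj, fun c => ?_⟩
  induction c using ConnectedComponent.ind with | _ v =>
  have : (G.connectedComponentMk v).supp.toFinset = insert v (G.neighborFinset v) := by
    ext w
    by_cases hwv : w = v
    · simp [hwv]
    · simp [hwv, hadj v w, Ne.symm hwv, eq_comm]
  rw [this, card_insert_of_notMem (by simp), card_neighborFinset_eq_degree, (h v).1]

theorem eq_three_and_nonempty_iso_threeK3 (hD : ∀ v, G.degree v < d)
    (hν : ∀ M, IsMatchingSet G M → #M ≤ d) (hiso : ∀ v, 0 < G.degree v)
    (he : #G.edgeFinset = d ^ 2) (hd : 0 < d) : d = 3 ∧ Nonempty (G ≃g threeK3) := by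
  obtain ⟨M, hM⟩ := G.exists_isMaximumMatchingSet
  obtain ⟨hle, heq⟩ := G.card_edgeFinset_le_mul_add_one (D := d - 1) (fun v => by
    have := hD v; omega) hM
  rw [Nat.sub_add_cancel hd] at hle heq
  have hreg v := heq (by nlinarith [hν M hM.1]) v (hiso v)
  obtain ⟨hadj, hsupp⟩ := G.adj_iff_and_card_supp_eq hreg
  rw [Nat.sub_add_cancel hd] at hsupp
  have hn : Fintype.card V = Fintype.card G.ConnectedComponent * d := by
    rw [← card_univ, card_eq_sum_ones, ← G.sum_sum_supp_toFinset]
    simp [hsupp]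
  have hsum : Fintype.card V * (d - 1) = 2 * d ^ 2 := by
    rw [← he, ← sum_degrees_eq_twice_card_edges, sum_congr rfl fun v _ => (hreg v).1, sum_const,
      smul_eq_mul, card_univ]
  have hcount : Fintype.card G.ConnectedComponent * (d - 1) = 2 * d :=
    Nat.eq_of_mul_eq_mul_right hd (by rw [mul_right_comm, ← hn, hsum]; ring)
  rcases Nat.eq_two_or_eq_three_of_mul_sub_one_eq hd hcount with ⟨rfl, -⟩ | ⟨rfl, hc⟩
  · have := hν _ (G.isMatchingSet_edgeFinset fun v => (hreg v).1.le)
    omega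
  · classical
    refine ⟨rfl, nonempty_iso_threeK3_of_adj_iff _ hc (fun c => ?_) hadj⟩
    rw [← hsupp c]
    congr 1
    ext v
    simp

end SimpleGraph

theorem star_matching_free_extremal {V : Type*} [Fintype V] [DecidableEq V] (G : SimpleGraph V)
    [DecidableRel G.Adj] (k : ℕ) (hk : 2 ≤ k)
    (hiso : ∀ v : V, 0 < G.degree v)
    (h1 : ¬ ContainsCopy (starGraph k) G)
    (h2 : ¬ ContainsCopy (kMatching k) G)
    (h3 : ¬ ContainsCopy (disjUnionGraph (starGraph (k - 1)) (kMatching 1)) G)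
    (he : G.edgeFinset.card = (k - 1) ^ 2) :
    Nonempty (G ≃g completeBipartiteGraph (Fin (k - 1)) (Fin (k - 1))) ∨
      (k = 4 ∧ Nonempty (G ≃g threeK3)) := by
  have hD v : G.degree v ≤ k - 1 :=
    Nat.le_sub_one_of_lt (degree_lt_of_not_containsCopy_starGraph h1 v)
  by_cases hmax : ∃ v, G.degree v = k - 1
  · obtain ⟨v, hv⟩ := hmax
    exact Or.inl (G.nonempty_iso_completeBipartiteGraph hD
      (fun _ hx => isVertexCover_neighborSet_of_not_containsCopy h3 hx) hiso he hv)
  · obtain ⟨hk4, hK3⟩ := G.eq_three_and_nonempty_iso_threeK3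
      (fun v => lt_of_le_of_ne (hD v) fun h => hmax ⟨v, h⟩)
      (fun M hM => Nat.le_sub_one_of_lt (hM.card_lt_of_not_containsCopy h2)) hiso he (by omega)
    exact Or.inr ⟨by omega, hK3⟩
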